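/- Let φ ∈ C¹((0,∞); ℝ) and F > 0. Then for every u ∈ 𝒰, E_qce'(y_F)[u] = (ε/2) φ'(2F) (u'_{−K−1} − u'_{−K+1} − u'_K + u'_{K+2}) = −φ'(2F) ⟨ĝ', u'⟩. In particular, if φ'(2F) ≠ 0 then y_F is not a critical point of E_qce. -/

import Mathlib

open Finset Real

noncomputable section

/-- The index set `{-N+1, ..., N}` of one period. -/
def idx (N : ℕ) : Finset ℤ := Finset.Icc (-(N : ℤ) + 1) (N : ℤ)

/-- The space 𝒰 of 2N-periodic displacements with zero mean. -/
def uSet (N : ℕ) : Set (ℤ → ℝ) :=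
  {u | (∀ ℓ : ℤ, u (ℓ + 2 * (N : ℤ)) = u ℓ) ∧ ∑ ℓ ∈ idx N, u ℓ = 0}

/-- Backward difference `v'_ℓ = ε⁻¹ (v_ℓ - v_{ℓ-1})`, with `ε = 1/N`. -/
def bD (N : ℕ) (v : ℤ → ℝ) (ℓ : ℤ) : ℝ := (N : ℝ) * (v ℓ - v (ℓ - 1))

/-- Centered second difference `v''_ℓ = ε⁻² (v_{ℓ+1} - 2 v_ℓ + v_{ℓ-1})`. -/
def cD2 (N : ℕ) (v : ℤ → ℝ) (ℓ : ℤ) : ℝ := (N : ℝ) ^ 2 * (v (ℓ + 1) - 2 * v ℓ + v (ℓ - 1))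

/-- Weighted ℓ²-norm. -/
def nl2 (N : ℕ) (v : ℤ → ℝ) : ℝ := Real.sqrt ((N : ℝ)⁻¹ * ∑ ℓ ∈ idx N, (v ℓ) ^ 2)

/-- Weighted ℓ¹-norm. -/
def nl1 (N : ℕ) (v : ℤ → ℝ) : ℝ := (N : ℝ)⁻¹ * ∑ ℓ ∈ idx N, |v ℓ|

/-- ℓ∞-norm over one period. -/
def nlinf (N : ℕ) (v : ℤ → ℝ) : ℝ := ⨆ ℓ : {ℓ : ℤ // ℓ ∈ idx N}, |v ℓ.1|

/-- Weighted ℓ²-inner product. -/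
def iprod (N : ℕ) (u v : ℤ → ℝ) : ℝ := (N : ℝ)⁻¹ * ∑ ℓ ∈ idx N, u ℓ * v ℓ

/-- The uniform deformation `(y_F)_ℓ = F ℓ ε`. -/
def yF (N : ℕ) (F : ℝ) : ℤ → ℝ := fun ℓ => F * (ℓ : ℝ) * (N : ℝ)⁻¹

/-- First variation `E'(y)[u]`. -/
def dE (E : (ℤ → ℝ) → ℝ) (y u : ℤ → ℝ) : ℝ := deriv (fun t : ℝ => E (y + t • u)) 0

/-- Second variation `E''(y)[u,v]`. -/
def d2E (E : (ℤ → ℝ) → ℝ) (y u v : ℤ → ℝ) : ℝ :=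
  deriv (fun s : ℝ => deriv (fun t : ℝ => E (y + s • u + t • v)) 0) 0

/-- The atomistic energy. -/
def Ea (N : ℕ) (φ : ℝ → ℝ) (y : ℤ → ℝ) : ℝ :=
  (N : ℝ)⁻¹ * ∑ ℓ ∈ idx N, (φ (bD N y ℓ) + φ (bD N y ℓ + bD N y (ℓ + 1)))

/-- The local QC (continuum) energy. -/
def Eqcl (N : ℕ) (φ : ℝ → ℝ) (y : ℤ → ℝ) : ℝ :=
  (N : ℝ)⁻¹ * ∑ ℓ ∈ idx N, (φ (bD N y ℓ) + φ (2 * bD N y ℓ))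

/-- The QNL atomistic region `{-K-1, ..., K+1}`. -/
def aQnl (K : ℕ) : Finset ℤ := Finset.Icc (-(K : ℤ) - 1) ((K : ℤ) + 1)

/-- The quasi-nonlocal QC energy. -/
def Eqnl (N K : ℕ) (φ : ℝ → ℝ) (y : ℤ → ℝ) : ℝ :=
  (N : ℝ)⁻¹ * ((∑ ℓ ∈ idx N, φ (bD N y ℓ))
    + (∑ ℓ ∈ aQnl K, φ (bD N y ℓ + bD N y (ℓ + 1)))
    + ∑ ℓ ∈ idx N \ aQnl K, (φ (2 * bD N y ℓ) + φ (2 * bD N y (ℓ + 1))) / 2)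

/-- The QCE atomistic region `{-K, ..., K}`. -/
def aQce (K : ℕ) : Finset ℤ := Finset.Icc (-(K : ℤ)) (K : ℤ)

/-- Atomistic energy contribution of atom ℓ. -/
def eAtom (N : ℕ) (φ : ℝ → ℝ) (y : ℤ → ℝ) (ℓ : ℤ) : ℝ :=
  (φ (bD N y ℓ) + φ (bD N y (ℓ + 1)) + φ (bD N y (ℓ - 1) + bD N y ℓ)
    + φ (bD N y (ℓ + 1) + bD N y (ℓ + 2))) / 2

/-- Continuum energy contribution of atom ℓ. -/
def eCont (N : ℕ) (φ : ℝ → ℝ) (y : ℤ → ℝ) (ℓ : ℤ) : ℝ :=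
  (φ (bD N y ℓ) + φ (bD N y (ℓ + 1)) + φ (2 * bD N y ℓ) + φ (2 * bD N y (ℓ + 1))) / 2

/-- The energy-based QC energy. -/
def Eqce (N K : ℕ) (φ : ℝ → ℝ) (y : ℤ → ℝ) : ℝ :=
  (N : ℝ)⁻¹ * ((∑ ℓ ∈ idx N \ aQce K, eCont N φ y ℓ) + ∑ ℓ ∈ aQce K, eAtom N φ y ℓ)

/-- The prescribed backward difference `ĝ'` of the ghost-force corrector. -/
def ghatD (K : ℕ) (ℓ : ℤ) : ℝ :=
  if ℓ = -(K : ℤ) - 1 ∨ ℓ = (K : ℤ) + 2 then -(1 / 2)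
  else if ℓ = -(K : ℤ) + 1 ∨ ℓ = (K : ℤ) then 1 / 2 else 0

/-- `μ_ε = 2 sin(π ε / 2) / ε` with `ε = 1/N`. -/
def muEps (N : ℕ) : ℝ := 2 * Real.sin (Real.pi * (N : ℝ)⁻¹ / 2) / (N : ℝ)⁻¹

/-- The `𝒰^{-1,∞}`-norm of a functional `T` on 𝒰. -/
def dualNorm (N : ℕ) (T : (ℤ → ℝ) → ℝ) : ℝ :=
  sSup {r : ℝ | ∃ v ∈ uSet N, nl1 N (bD N v) = 1 ∧ r = T v}

/-! At `y_F` every nearest-neighbour bond has length `F` and every next-nearest one `2F`, so the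
first variation is linear in `u'` with constant coefficients. Writing `E_qce` as the continuum energy
over the whole period plus the atomistic-minus-continuum correction on `𝒜`, the continuum part
contributes a multiple of `∑ u'_ℓ`, which vanishes by periodicity, while the correction contributes
`φ'(2F)/2` times a telescoping sum that leaves only the four interface terms, i.e. `-φ'(2F) ⟨ĝ', u'⟩`.
Testing with `u = ĝ` gives `E_qce'(y_F)[ĝ] = -φ'(2F) ‖ĝ'‖² = -φ'(2F) ε`. -/

theorem Finset.sum_Icc_int_sub {M : Type*} [AddCommGroup M] (f : ℤ → M) {a b : ℤ}
    (hab : a ≤ b + 1) : ∑ ℓ ∈ Icc a b, (f (ℓ + 1) - f ℓ) = f (b + 1) - f a := by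
  induction b, (show a - 1 ≤ b by omega) using Int.leInduction with
  | base => simp
  | succ b _ ih =>
    rw [← insert_Icc_right_eq_Icc_add_one (by omega), sum_insert (by simp), ih (by omega)]
    abel

theorem sum_idx_bD_add_eq_zero {N : ℕ} {u : ℤ → ℝ} (hu : ∀ ℓ, u (ℓ + 2 * (N : ℤ)) = u ℓ)
    (k : ℤ) : ∑ ℓ ∈ idx N, bD N u (ℓ + k) = 0 := by
  set f : ℤ → ℝ := fun ℓ => u (ℓ - 1 + k)
  calc ∑ ℓ ∈ idx N, bD N u (ℓ + k) = N * ∑ ℓ ∈ idx N, (f (ℓ + 1) - f ℓ) := by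
        simp only [mul_sum, bD, f]
        congr! 4 <;> ring
    _ = N * (f (N + 1) - f (-N + 1)) := by rw [idx, sum_Icc_int_sub _ (by omega)]
    _ = 0 := by
        rw [show f (N + 1) = f (-N + 1) by convert hu (-N + k) using 2 <;> ring,
          sub_self, mul_zero]

theorem sum_aQce_sub_add_sub (K : ℕ) (c : ℤ → ℝ) :
    ∑ ℓ ∈ aQce K, ((c (ℓ - 1) - c ℓ) + (c (ℓ + 2) - c (ℓ + 1)))
      = c (-K - 1) - c (-K + 1) - c K + c (K + 2) := by
  have h1 := sum_Icc_int_sub (fun ℓ => -c (ℓ - 1)) (a := -K) (b := K) (by omega)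
  have h2 := sum_Icc_int_sub (fun ℓ => c (ℓ + 1)) (a := -K) (b := K) (by omega)
  simp only [add_sub_cancel_right, neg_sub_neg, add_assoc, one_add_one_eq_two] at h1 h2
  rw [aQce, sum_add_distrib, h1, h2]
  ring

theorem aQce_subset_idx {N K : ℕ} (hKN : K < N) : aQce K ⊆ idx N := by
  intro ℓ
  simp only [aQce, idx, mem_Icc]
  omega

theorem Eqce_eq_sum_eCont_add {N K : ℕ} (hKN : K < N) (φ : ℝ → ℝ) (y : ℤ → ℝ) :
    Eqce N K φ y = (N : ℝ)⁻¹ * (∑ ℓ ∈ idx N, eCont N φ y ℓ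
      + ∑ ℓ ∈ aQce K, (eAtom N φ y ℓ - eCont N φ y ℓ)) := by
  rw [Eqce, sum_sdiff_eq_sub (aQce_subset_idx hKN), sum_sub_distrib]
  ring

theorem HasDerivAt.comp_const_add_mul {φ : ℝ → ℝ} {d x : ℝ} (h : HasDerivAt φ d x) (a : ℝ) :
    HasDerivAt (fun t => φ (x + t * a)) (d * a) 0 := by
  have hlin : HasDerivAt (fun t : ℝ => x + t * a) a 0 := by
    simpa using ((hasDerivAt_id 0).mul_const a).const_add x
  exact h.comp_of_eq 0 hlin (by simp)

section UniformDeformation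

variable {N : ℕ} {φ : ℝ → ℝ} {F dF d2 : ℝ} (u : ℤ → ℝ) (ℓ : ℤ)

theorem bD_yF_add_smul (hN : N ≠ 0) (t : ℝ) :
    bD N (yF N F + t • u) ℓ = F + t * bD N u ℓ := by
  simp only [bD, yF, Pi.add_apply, Pi.smul_apply, smul_eq_mul, Int.cast_sub, Int.cast_one]
  field_simp
  ring

theorem hasDerivAt_eCont_yF (hN : N ≠ 0) (hF : HasDerivAt φ dF F)
    (h2F : HasDerivAt φ d2 (2 * F)) :
    HasDerivAt (fun t : ℝ => eCont N φ (yF N F + t • u) ℓ)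
      ((dF + 2 * d2) / 2 * (bD N u ℓ + bD N u (ℓ + 1))) 0 := by
  have h : (fun t : ℝ => eCont N φ (yF N F + t • u) ℓ) = fun t =>
      (φ (F + t * bD N u ℓ) + φ (F + t * bD N u (ℓ + 1)) + φ (2 * F + t * (2 * bD N u ℓ))
        + φ (2 * F + t * (2 * bD N u (ℓ + 1)))) / 2 := by
    funext t
    simp only [eCont, bD_yF_add_smul u _ hN]
    ring_nf
  rw [h]
  refine ((((hF.comp_const_add_mul _).add (hF.comp_const_add_mul _)).add
    (h2F.comp_const_add_mul _)).add (h2F.comp_const_add_mul _)).div_const 2 |>.congr_deriv ?_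
  ring

theorem hasDerivAt_eAtom_sub_eCont_yF (hN : N ≠ 0) (h2F : HasDerivAt φ d2 (2 * F)) :
    HasDerivAt (fun t : ℝ => eAtom N φ (yF N F + t • u) ℓ - eCont N φ (yF N F + t • u) ℓ)
      (d2 / 2 * ((bD N u (ℓ - 1) - bD N u ℓ) + (bD N u (ℓ + 2) - bD N u (ℓ + 1)))) 0 := by
  have h : (fun t : ℝ => eAtom N φ (yF N F + t • u) ℓ - eCont N φ (yF N F + t • u) ℓ) =
      fun t => (φ (2 * F + t * (bD N u (ℓ - 1) + bD N u ℓ))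
        + φ (2 * F + t * (bD N u (ℓ + 1) + bD N u (ℓ + 2)))
        - φ (2 * F + t * (2 * bD N u ℓ)) - φ (2 * F + t * (2 * bD N u (ℓ + 1)))) / 2 := by
    funext t
    simp only [eAtom, eCont, bD_yF_add_smul u _ hN]
    ring_nf
  rw [h]
  refine ((((h2F.comp_const_add_mul _).add (h2F.comp_const_add_mul _)).sub
    (h2F.comp_const_add_mul _)).sub (h2F.comp_const_add_mul _)).div_const 2 |>.congr_deriv ?_
  ring

end UniformDeformation

theorem dE_Eqce_yF {N K : ℕ} (hKN : K < N) {φ : ℝ → ℝ} {F dF d2 : ℝ}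
    (hF : HasDerivAt φ dF F) (h2F : HasDerivAt φ d2 (2 * F)) {u : ℤ → ℝ}
    (hu : ∀ ℓ, u (ℓ + 2 * (N : ℤ)) = u ℓ) :
    dE (Eqce N K φ) (yF N F) u = (N : ℝ)⁻¹ / 2 * d2 *
      (bD N u (-K - 1) - bD N u (-K + 1) - bD N u K + bD N u (K + 2)) := by
  have hN : N ≠ 0 := by omega
  have hD : HasDerivAt (fun t : ℝ => Eqce N K φ (yF N F + t • u))
      ((N : ℝ)⁻¹ * (∑ ℓ ∈ idx N, (dF + 2 * d2) / 2 * (bD N u ℓ + bD N u (ℓ + 1))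
        + ∑ ℓ ∈ aQce K,
          d2 / 2 * ((bD N u (ℓ - 1) - bD N u ℓ) + (bD N u (ℓ + 2) - bD N u (ℓ + 1))))) 0 := by
    simp only [Eqce_eq_sum_eCont_add hKN]
    exact ((HasDerivAt.fun_sum fun ℓ _ => hasDerivAt_eCont_yF u ℓ hN hF h2F).add
      (HasDerivAt.fun_sum fun ℓ _ => hasDerivAt_eAtom_sub_eCont_yF u ℓ hN h2F)).const_mul _
  have hsum : ∑ ℓ ∈ idx N, (bD N u ℓ + bD N u (ℓ + 1)) = 0 := by
    rw [sum_add_distrib, sum_idx_bD_add_eq_zero hu 1, add_zero]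
    simpa using sum_idx_bD_add_eq_zero hu 0
  rw [dE, hD.deriv, ← mul_sum, ← mul_sum, hsum, sum_aQce_sub_add_sub]
  ring

section GhostForceCorrector

variable {N K : ℕ} {w : ℤ → ℝ}

theorem iprod_eq_of_eqOn_ghatD (hKN : K + 2 ≤ N) (hw : ∀ ℓ ∈ idx N, w ℓ = ghatD K ℓ)
    (v : ℤ → ℝ) :
    iprod N w v = (N : ℝ)⁻¹ / 2 * (v (-K + 1) + v K - v (-K - 1) - v (K + 2)) := by
  have hdecomp : ∀ ℓ, ghatD K ℓ * v ℓ = (if -K + 1 = ℓ then v ℓ / 2 else 0)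
      + (if (K : ℤ) = ℓ then v ℓ / 2 else 0) - (if -K - 1 = ℓ then v ℓ / 2 else 0)
      - (if K + 2 = ℓ then v ℓ / 2 else 0) := by
    intro ℓ
    unfold ghatD
    split_ifs <;> first | (exfalso; omega) | ring
  have hmem : ∀ ℓ : ℤ, -K - 1 ≤ ℓ → ℓ ≤ K + 2 → ℓ ∈ idx N := by
    intro ℓ h₁ h₂
    simp only [idx, mem_Icc]
    omega
  rw [iprod, sum_congr rfl fun ℓ hℓ => by rw [hw ℓ hℓ, hdecomp], sum_sub_distrib,
    sum_sub_distrib, sum_add_distrib]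
  simp (disch := omega) only [sum_ite_eq, hmem, if_true]
  ring

theorem iprod_self_eq_of_eqOn_ghatD (hKN : K + 2 ≤ N) (hw : ∀ ℓ ∈ idx N, w ℓ = ghatD K ℓ) :
    iprod N w w = (N : ℝ)⁻¹ := by
  rw [iprod_eq_of_eqOn_ghatD hKN hw]
  simp (disch := simp only [idx, mem_Icc]; omega) only [hw]
  simp (disch := omega) only [ghatD, if_neg, true_or, or_true, if_true]
  ring

end GhostForceCorrector

theorem stmt9_general (N K : ℕ) (hKN : K + 3 ≤ N)
    (φ : ℝ → ℝ) (hφ : ContDiffOn ℝ 1 φ (Set.Ioi 0)) (F : ℝ) (hF : 0 < F)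
    (g : ℤ → ℝ) (hg : g ∈ uSet N) (hgD : ∀ ℓ ∈ idx N, bD N g ℓ = ghatD K ℓ) :
    (∀ u ∈ uSet N,
      dE (Eqce N K φ) (yF N F) u
          = (N : ℝ)⁻¹ / 2 * deriv φ (2 * F) *
            (bD N u (-(K : ℤ) - 1) - bD N u (-(K : ℤ) + 1)
              - bD N u (K : ℤ) + bD N u ((K : ℤ) + 2))
      ∧ dE (Eqce N K φ) (yF N F) u = -(deriv φ (2 * F)) * iprod N (bD N g) (bD N u))
    ∧ (deriv φ (2 * F) ≠ 0 → ¬ ∀ u ∈ uSet N, dE (Eqce N K φ) (yF N F) u = 0) := by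
  have hφ' : ∀ x > 0, HasDerivAt φ (deriv φ x) x := fun x hx =>
    ((hφ.differentiableOn one_ne_zero).differentiableAt (Ioi_mem_nhds hx)).hasDerivAt
  have hvar : ∀ u ∈ uSet N, dE (Eqce N K φ) (yF N F) u
      = (N : ℝ)⁻¹ / 2 * deriv φ (2 * F) *
        (bD N u (-K - 1) - bD N u (-K + 1) - bD N u K + bD N u (K + 2)) := fun u hu =>
    dE_Eqce_yF (by omega) (hφ' F hF) (hφ' (2 * F) (by positivity)) hu.1
  have hpair : ∀ u ∈ uSet N, dE (Eqce N K φ) (yF N F) u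
      = -(deriv φ (2 * F)) * iprod N (bD N g) (bD N u) := fun u hu => by
    rw [hvar u hu, iprod_eq_of_eqOn_ghatD (by omega) hgD]
    ring
  refine ⟨fun u hu => ⟨hvar u hu, hpair u hu⟩, fun hd hcrit => hd ?_⟩
  have hg_crit := hcrit g hg
  rw [hpair g hg, iprod_self_eq_of_eqOn_ghatD (by omega) hgD] at hg_crit
  have hN : (N : ℝ)⁻¹ ≠ 0 := inv_ne_zero (Nat.cast_ne_zero.mpr (by omega))
  exact neg_eq_zero.mp ((mul_eq_zero.mp hg_crit).resolve_right hN)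

theorem stmt9 (N K : ℕ) (hN : 2 ≤ N) (hK : 1 < K) (hKN : K + 3 ≤ N)
    (φ : ℝ → ℝ) (hφ : ContDiffOn ℝ 1 φ (Set.Ioi 0)) (F : ℝ) (hF : 0 < F)
    (g : ℤ → ℝ) (hg : g ∈ uSet N) (hgD : ∀ ℓ ∈ idx N, bD N g ℓ = ghatD K ℓ) :
    (∀ u ∈ uSet N,
      dE (Eqce N K φ) (yF N F) u
          = (N : ℝ)⁻¹ / 2 * deriv φ (2 * F) *
            (bD N u (-(K : ℤ) - 1) - bD N u (-(K : ℤ) + 1)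
              - bD N u (K : ℤ) + bD N u ((K : ℤ) + 2))
      ∧ dE (Eqce N K φ) (yF N F) u = -(deriv φ (2 * F)) * iprod N (bD N g) (bD N u))
    ∧ (deriv φ (2 * F) ≠ 0 → ¬ ∀ u ∈ uSet N, dE (Eqce N K φ) (yF N F) u = 0) :=
  stmt9_general N K hKN φ hφ F hF g hg hgD
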